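/- Let x, y, q be complex numbers with |q| < 1, and suppose x²y·q^(k+1) ≠ −1 for every integer k ≥ 0. Then Σ_{i,j,k≥0} q^(C(k,2)+C(i+j+k,2)+2j+2k+i) · x^(2i+2k+j) · y^(2j+2k+i) / ((q;q)_i · (q;q)_j · (q;q)_k) = (−x²yq;q)_∞ · Σ_{m≥0} (−x;q)_m · q^(C(m,2)+2m) · (xy²)^m / ((q;q)_m · (−x²yq;q)_m), where C(m,2) = m(m−1)/2. -/

import Mathlib

/-!
Summing over the first index is Euler's identity `∑ᵢ q^C(i,2) zⁱ / (q;q)ᵢ = (-z;q)_∞` with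
`z = x²y q^(j+k+1)`. Grouping the remaining pairs `(j, k)` by `n = j + k`, the finite q-binomial
theorem `(-x;q)ₙ = (q;q)ₙ ∑_{j+k=n} q^C(k,2) xᵏ / ((q;q)ⱼ (q;q)ₖ)` evaluates each antidiagonal,
and `(-x²yq;q)_∞ = (-x²yq;q)ₙ (-x²yq^(n+1);q)_∞` produces the remaining denominator.
Euler's identity itself follows from the functional equation `E(z) = (1 + z) E(qz)` of its
left side, iterated and combined with the continuity of `E` at `0`.
-/

open Filter Topology Finset

/-- Finite q-Pochhammer symbol `(a; q)_n = ∏_{k=0}^{n-1} (1 - a q^k)`. -/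
noncomputable def qPoch (a q : ℂ) (n : ℕ) : ℂ := ∏ k ∈ Finset.range n, (1 - a * q ^ k)

/-- Infinite q-Pochhammer symbol `(a; q)_∞ = ∏_{k=0}^{∞} (1 - a q^k)`. -/
noncomputable def qPochInf (a q : ℂ) : ℂ := ∏' k : ℕ, (1 - a * q ^ k)

lemma Nat.succ_choose_two (n : ℕ) : (n + 1).choose 2 = n.choose 2 + n := by
  simp [Nat.choose_succ_succ', add_comm]

lemma Nat.add_choose_two (a b : ℕ) : (a + b).choose 2 = a.choose 2 + b.choose 2 + a * b := by
  induction b with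
  | zero => simp
  | succ b ih =>
    rw [← add_assoc, Nat.succ_choose_two, ih, Nat.succ_choose_two]
    ring

lemma tsum_eq_tsum_sum_antidiagonal {α A : Type*} [AddCommGroup α] [UniformSpace α]
    [IsUniformAddGroup α] [CompleteSpace α] [T0Space α] [AddMonoid A] [HasAntidiagonal A]
    {f : A × A → α} (hf : Summable f) :
    ∑' p, f p = ∑' n, ∑ p ∈ antidiagonal n, f p := by
  let e := HasAntidiagonal.sigmaAntidiagonalEquivProd (A := A)
  rw [← e.tsum_eq f]
  exact (e.summable_iff.mpr hf).tsum_sigma.trans (tsum_congr fun n => tsum_subtype _ f)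

section qPoch

variable {q : ℂ}

@[simp]
lemma qPoch_zero (a q : ℂ) : qPoch a q 0 = 1 := prod_range_zero _

lemma qPoch_succ (a q : ℂ) (n : ℕ) : qPoch a q (n + 1) = qPoch a q n * (1 - a * q ^ n) :=
  prod_range_succ _ _

lemma qPoch_self_succ (q : ℂ) (n : ℕ) : qPoch q q (n + 1) = qPoch q q n * (1 - q ^ (n + 1)) := by
  rw [qPoch_succ, pow_succ']

lemma qPoch_self_ne_zero (hq : ‖q‖ < 1) (n : ℕ) : qPoch q q n ≠ 0 := by
  induction n with
  | zero => simp
  | succ n ih =>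
    rw [qPoch_self_succ]
    refine mul_ne_zero ih (sub_ne_zero.2 fun h => ?_)
    have : ‖q ^ (n + 1)‖ < 1 := by
      rw [norm_pow]
      exact pow_lt_one₀ (norm_nonneg q) hq n.succ_ne_zero
    simp [← h] at this

lemma one_sub_pow_succ_ne_zero (hq : ∀ n, qPoch q q n ≠ 0) (n : ℕ) : 1 - q ^ (n + 1) ≠ 0 :=
  right_ne_zero_of_mul (qPoch_self_succ q n ▸ hq (n + 1))

end qPoch

section qBinomial

variable {q : ℂ}

noncomputable def qBinomTerm (q x : ℂ) (j k : ℕ) : ℂ :=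
  q ^ k.choose 2 * x ^ k / (qPoch q q j * qPoch q q k)

lemma qBinomTerm_succ_left (hq : ∀ n, qPoch q q n ≠ 0) (x : ℂ) (j k : ℕ) :
    qBinomTerm q x (j + 1) k * (1 - q ^ (j + 1)) = qBinomTerm q x j k := by
  have := one_sub_pow_succ_ne_zero hq j
  simp only [qBinomTerm, qPoch_self_succ]
  field_simp

lemma qBinomTerm_succ_right (hq : ∀ n, qPoch q q n ≠ 0) (x : ℂ) (j k : ℕ) :
    qBinomTerm q x j (k + 1) * (1 - q ^ (k + 1)) = x * q ^ k * qBinomTerm q x j k := by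
  have := one_sub_pow_succ_ne_zero hq k
  simp only [qBinomTerm, qPoch_self_succ, Nat.succ_choose_two]
  field_simp
  ring

lemma sum_qBinomTerm_succ (hq : ∀ n, qPoch q q n ≠ 0) (x : ℂ) (n : ℕ) :
    (1 - q ^ (n + 1)) * ∑ p ∈ antidiagonal (n + 1), qBinomTerm q x p.1 p.2 =
      (1 + x * q ^ n) * ∑ p ∈ antidiagonal n, qBinomTerm q x p.1 p.2 := by
  -- `1 - q^(j+k) = (1 - q^j) + q^j (1 - q^k)`, and each part shifts one index of the antidiagonal
  have hsplit : ∀ p ∈ antidiagonal (n + 1), (1 - q ^ (n + 1)) * qBinomTerm q x p.1 p.2 =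
      qBinomTerm q x p.1 p.2 * (1 - q ^ p.1) + q ^ p.1 * (qBinomTerm q x p.1 p.2 * (1 - q ^ p.2)) := by
    intro p hp
    rw [← mem_antidiagonal.mp hp, pow_add]
    ring
  have hright : ∑ p ∈ antidiagonal n, q ^ p.1 * (x * q ^ p.2 * qBinomTerm q x p.1 p.2) =
      x * q ^ n * ∑ p ∈ antidiagonal n, qBinomTerm q x p.1 p.2 := by
    rw [mul_sum]
    refine sum_congr rfl fun p hp => ?_
    rw [← mem_antidiagonal.mp hp, pow_add]
    ring
  rw [mul_sum, sum_congr rfl hsplit, sum_add_distrib, Nat.sum_antidiagonal_succ,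
    Nat.sum_antidiagonal_succ' (f := fun p => q ^ p.1 * (qBinomTerm q x p.1 p.2 * (1 - q ^ p.2)))]
  simp only [pow_zero, sub_self, mul_zero, zero_add, qBinomTerm_succ_left hq,
    qBinomTerm_succ_right hq, hright]
  ring

theorem qPoch_neg_eq_mul_sum_qBinomTerm (hq : ∀ n, qPoch q q n ≠ 0) (x : ℂ) (n : ℕ) :
    qPoch (-x) q n = qPoch q q n * ∑ p ∈ antidiagonal n, qBinomTerm q x p.1 p.2 := by
  induction n with
  | zero => simp [qBinomTerm]
  | succ n ih =>
    rw [qPoch_succ, qPoch_self_succ, ih, mul_assoc (qPoch q q n) (1 - _), sum_qBinomTerm_succ hq]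
    ring

end qBinomial

section Euler

variable {q : ℂ}

noncomputable def eulerTerm (q z : ℂ) (n : ℕ) : ℂ := q ^ n.choose 2 * z ^ n / qPoch q q n

@[simp]
lemma eulerTerm_zero (q z : ℂ) : eulerTerm q z 0 = 1 := by
  simp [eulerTerm]

lemma norm_eulerTerm (q z : ℂ) (n : ℕ) :
    ‖eulerTerm q z n‖ = ‖q‖ ^ n.choose 2 * ‖z‖ ^ n / ‖qPoch q q n‖ := by
  simp [eulerTerm]

lemma eulerTerm_succ (q z : ℂ) (n : ℕ) :
    eulerTerm q z (n + 1) = eulerTerm q z n * (z * q ^ n / (1 - q ^ (n + 1))) := by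
  rw [eulerTerm, eulerTerm, qPoch_self_succ, Nat.succ_choose_two, ← mul_div_mul_comm]
  ring

lemma summable_norm_eulerTerm (hq : ‖q‖ < 1) (z : ℂ) : Summable fun n => ‖eulerTerm q z n‖ := by
  have hratio : Tendsto (fun n => z * q ^ n / (1 - q ^ (n + 1))) atTop (𝓝 0) := by
    have hpow := tendsto_pow_atTop_nhds_zero_of_norm_lt_one hq
    simpa [Pi.div_def] using (hpow.const_mul z).div
      ((hpow.comp (tendsto_add_atTop_nat 1)).const_sub 1) (by simp)
  refine summable_of_ratio_norm_eventually_le (r := 1 / 2) (by norm_num) ?_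
  filter_upwards [hratio.norm.eventually (gt_mem_nhds (by norm_num : ‖(0 : ℂ)‖ < 1 / 2))]
    with n hn
  rw [norm_norm, norm_norm, eulerTerm_succ, norm_mul, mul_comm (1 / 2)]
  exact mul_le_mul_of_nonneg_left hn.le (norm_nonneg _)

lemma eulerTerm_succ_eq_add (hq : ∀ n, qPoch q q n ≠ 0) (z : ℂ) (n : ℕ) :
    eulerTerm q z (n + 1) = eulerTerm q (q * z) (n + 1) + z * eulerTerm q (q * z) n := by
  have := one_sub_pow_succ_ne_zero hq n
  have := hq n
  simp only [eulerTerm, qPoch_self_succ, Nat.succ_choose_two]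
  field_simp
  ring

lemma tsum_eulerTerm_eq_one_add_mul (hq : ‖q‖ < 1) (z : ℂ) :
    ∑' n, eulerTerm q z n = (1 + z) * ∑' n, eulerTerm q (q * z) n := by
  have hs : ∀ w, Summable (eulerTerm q w) := fun w => (summable_norm_eulerTerm hq w).of_norm
  have hs' : ∀ w, Summable fun n => eulerTerm q w (n + 1) := fun w =>
    (summable_nat_add_iff 1).mpr (hs w)
  calc ∑' n, eulerTerm q z n = eulerTerm q z 0 + ∑' n, eulerTerm q z (n + 1) :=
        (hs z).tsum_eq_zero_add
    _ = 1 + ∑' n, (eulerTerm q (q * z) (n + 1) + z * eulerTerm q (q * z) n) := by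
        rw [eulerTerm_zero]
        exact congrArg _ (tsum_congr fun n => eulerTerm_succ_eq_add (qPoch_self_ne_zero hq) z n)
    _ = (eulerTerm q (q * z) 0 + ∑' n, eulerTerm q (q * z) (n + 1)) +
          z * ∑' n, eulerTerm q (q * z) n := by
        rw [(hs' _).tsum_add ((hs _).mul_left z), tsum_mul_left, eulerTerm_zero, add_assoc]
    _ = (1 + z) * ∑' n, eulerTerm q (q * z) n := by
        rw [← (hs _).tsum_eq_zero_add]
        ring

lemma tsum_eulerTerm_eq_qPoch_mul (hq : ‖q‖ < 1) (z : ℂ) (m : ℕ) :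
    ∑' n, eulerTerm q z n = qPoch (-z) q m * ∑' n, eulerTerm q (z * q ^ m) n := by
  induction m with
  | zero => simp
  | succ m ih =>
    rw [ih, tsum_eulerTerm_eq_one_add_mul hq, qPoch_succ, pow_succ]
    ring_nf

lemma tendsto_tsum_eulerTerm_mul_pow (hq : ‖q‖ < 1) (z : ℂ) :
    Tendsto (fun m => ∑' n, eulerTerm q (z * q ^ m) n) atTop (𝓝 1) := by
  have hcont : ContinuousAt (fun w => ∑' n, eulerTerm q w n) 0 := by
    refine (continuousOn_tsum (u := fun n => ‖eulerTerm q 1 n‖) (fun n => ?_)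
      (summable_norm_eulerTerm hq 1) fun n w hw => ?_).continuousAt
      (Metric.closedBall_mem_nhds 0 one_pos)
    · unfold eulerTerm
      fun_prop
    · rw [norm_eulerTerm, norm_eulerTerm]
      gcongr
      simpa using hw
  have hzero : ∑' n, eulerTerm q 0 n = 1 := by
    rw [tsum_eq_single 0 fun n hn => by simp [eulerTerm, hn], eulerTerm_zero]
  have hpow : Tendsto (fun m => z * q ^ m) atTop (𝓝 0) := by
    simpa using (tendsto_pow_atTop_nhds_zero_of_norm_lt_one hq).const_mul z
  simpa [hzero, Function.comp_def] using hcont.tendsto.comp hpow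

theorem tsum_eulerTerm (hq : ‖q‖ < 1) (z : ℂ) : ∑' n, eulerTerm q z n = qPochInf (-z) q := by
  have hmult : Multipliable fun k => 1 - -z * q ^ k := by
    have hgeom : Summable fun k => ‖z * q ^ k‖ := by
      simpa [norm_mul, norm_pow] using
        (summable_geometric_of_lt_one (norm_nonneg _) hq).mul_left ‖z‖
    simpa [neg_mul, sub_neg_eq_add] using multipliable_one_add_of_summable hgeom
  have hconst : Tendsto (fun m => qPoch (-z) q m * ∑' n, eulerTerm q (z * q ^ m) n) atTop
      (𝓝 (∑' n, eulerTerm q z n)) :=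
    tendsto_const_nhds.congr fun m => tsum_eulerTerm_eq_qPoch_mul hq z m
  have hlim := hmult.hasProd.tendsto_prod_nat.mul (tendsto_tsum_eulerTerm_mul_pow hq z)
  rw [mul_one] at hlim
  exact tendsto_nhds_unique hconst hlim

end Euler

section TripleSum

variable {q : ℂ}

noncomputable def tripleTerm (x y q : ℂ) (t : ℕ × ℕ × ℕ) : ℂ :=
  q ^ (Nat.choose t.2.2 2 + Nat.choose (t.1 + t.2.1 + t.2.2) 2 + 2 * t.2.1 + 2 * t.2.2 + t.1) *
    x ^ (2 * t.1 + 2 * t.2.2 + t.2.1) * y ^ (2 * t.2.1 + 2 * t.2.2 + t.1) /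
    (qPoch q q t.1 * qPoch q q t.2.1 * qPoch q q t.2.2)

lemma tripleTerm_eq (x y q : ℂ) (i j k : ℕ) :
    tripleTerm x y q (i, j, k) = eulerTerm q (x ^ 2 * y * q ^ (j + k + 1)) i *
      (q ^ ((j + k).choose 2 + 2 * (j + k)) * (x * y ^ 2) ^ (j + k)) * qBinomTerm q x j k := by
  simp only [tripleTerm, eulerTerm, qBinomTerm]
  rw [add_assoc i, Nat.add_choose_two i]
  ring

lemma exists_norm_tripleTerm_le (hq : ‖q‖ < 1) (x y : ℂ) : ∃ R : ℂ, ∀ i j k : ℕ,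
    ‖tripleTerm x y q (i, j, k)‖ ≤ ‖eulerTerm q R i‖ * (‖eulerTerm q R j‖ * ‖eulerTerm q R k‖) := by
  set X := max 1 ‖x‖
  set Y := max 1 ‖y‖
  have hX : 0 ≤ X := zero_le_one.trans (le_max_left _ _)
  have hY : 0 ≤ Y := zero_le_one.trans (le_max_left _ _)
  refine ⟨((X * Y) ^ 2 : ℝ), fun i j k => ?_⟩
  have hpow : ∀ {w : ℂ} {W : ℝ} {a : ℕ}, ‖w‖ ≤ W → 1 ≤ W → a ≤ 2 * (i + j + k) →
      ‖w‖ ^ a ≤ W ^ (2 * (i + j + k)) := fun hw hW ha =>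
    (pow_le_pow_left₀ (norm_nonneg _) hw _).trans (pow_le_pow_right₀ hW ha)
  have hq_exp : i.choose 2 + j.choose 2 + k.choose 2 ≤ k.choose 2 + (i + j + k).choose 2 +
      2 * j + 2 * k + i := by
    rw [Nat.add_choose_two, Nat.add_choose_two]
    omega
  calc ‖tripleTerm x y q (i, j, k)‖
      = ‖q‖ ^ (k.choose 2 + (i + j + k).choose 2 + 2 * j + 2 * k + i) *
          (‖x‖ ^ (2 * i + 2 * k + j) * ‖y‖ ^ (2 * j + 2 * k + i)) /
          (‖qPoch q q i‖ * ‖qPoch q q j‖ * ‖qPoch q q k‖) := by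
        simp only [tripleTerm, norm_div, norm_mul, norm_pow]
        ring
    _ ≤ ‖q‖ ^ (i.choose 2 + j.choose 2 + k.choose 2) *
          (X ^ (2 * (i + j + k)) * Y ^ (2 * (i + j + k))) /
          (‖qPoch q q i‖ * ‖qPoch q q j‖ * ‖qPoch q q k‖) := by
        gcongr ?_ * (?_ * ?_) / _
        · exact pow_le_pow_of_le_one (norm_nonneg q) hq.le hq_exp
        · exact hpow (le_max_right _ _) (le_max_left _ _) (by omega)
        · exact hpow (le_max_right _ _) (le_max_left _ _) (by omega)
    _ = ‖eulerTerm q ((X * Y) ^ 2 : ℝ) i‖ *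
          (‖eulerTerm q ((X * Y) ^ 2 : ℝ) j‖ * ‖eulerTerm q ((X * Y) ^ 2 : ℝ) k‖) := by
        simp only [norm_eulerTerm, Complex.norm_real, Real.norm_eq_abs, abs_pow, abs_mul,
          abs_of_nonneg hX, abs_of_nonneg hY]
        ring

lemma summable_tripleTerm (hq : ‖q‖ < 1) (x y : ℂ) : Summable (tripleTerm x y q) := by
  obtain ⟨R, hR⟩ := exists_norm_tripleTerm_le hq x y
  have hE := summable_norm_eulerTerm hq R
  have hE0 : ∀ n, 0 ≤ ‖eulerTerm q R n‖ := fun n => norm_nonneg _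
  refine Summable.of_norm_bounded (hE.mul_of_nonneg (hE.mul_of_nonneg hE hE0 hE0) hE0
    fun _ => mul_nonneg (hE0 _) (hE0 _)) ?_
  rintro ⟨i, j, k⟩
  exact hR i j k

lemma sum_antidiagonal_tsum_tripleTerm (hq : ‖q‖ < 1) (x y : ℂ) (n : ℕ)
    (hn : qPoch (-(x ^ 2 * y * q)) q n ≠ 0) :
    ∑ p ∈ antidiagonal n, ∑' i, tripleTerm x y q (i, p) =
      (∑' i, eulerTerm q (x ^ 2 * y * q) i) *
        (qPoch (-x) q n * q ^ (n.choose 2 + 2 * n) * (x * y ^ 2) ^ n /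
          (qPoch q q n * qPoch (-(x ^ 2 * y * q)) q n)) := by
  have hterm : ∀ p ∈ antidiagonal n, ∑' i, tripleTerm x y q (i, p) =
      (∑' i, eulerTerm q (x ^ 2 * y * q ^ (n + 1)) i) * (q ^ (n.choose 2 + 2 * n) *
        (x * y ^ 2) ^ n) * qBinomTerm q x p.1 p.2 := by
    rintro ⟨j, k⟩ hp
    rw [HasAntidiagonal.mem_antidiagonal] at hp
    simp only [tripleTerm_eq, ← hp, tsum_mul_right]
  rw [sum_congr rfl hterm, ← mul_sum, tsum_eulerTerm_eq_qPoch_mul hq (x ^ 2 * y * q) n,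
    qPoch_neg_eq_mul_sum_qBinomTerm (qPoch_self_ne_zero hq) x n,
    show x ^ 2 * y * q * q ^ n = x ^ 2 * y * q ^ (n + 1) by ring]
  field_simp [qPoch_self_ne_zero hq n]

end TripleSum

theorem stmt_12 (x y q : ℂ) (hq : ‖q‖ < 1)
    (hxy : ∀ k : ℕ, x ^ 2 * y * q ^ (k + 1) ≠ -1) :
    (∑' t : ℕ × ℕ × ℕ,
        q ^ (Nat.choose t.2.2 2 + Nat.choose (t.1 + t.2.1 + t.2.2) 2 +
              2 * t.2.1 + 2 * t.2.2 + t.1) *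
          x ^ (2 * t.1 + 2 * t.2.2 + t.2.1) * y ^ (2 * t.2.1 + 2 * t.2.2 + t.1) /
          (qPoch q q t.1 * qPoch q q t.2.1 * qPoch q q t.2.2))
      = qPochInf (-(x ^ 2 * y * q)) q *
        ∑' m : ℕ,
          qPoch (-x) q m * q ^ (Nat.choose m 2 + 2 * m) * (x * y ^ 2) ^ m /
            (qPoch q q m * qPoch (-(x ^ 2 * y * q)) q m) := by
  have hz : ∀ n, qPoch (-(x ^ 2 * y * q)) q n ≠ 0 := fun n =>
    prod_ne_zero_iff.mpr fun k _ h => hxy k (by linear_combination h)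
  have hswap : Summable fun s : (ℕ × ℕ) × ℕ => tripleTerm x y q (s.2, s.1) :=
    (Equiv.prodComm _ _).summable_iff.mpr (summable_tripleTerm hq x y)
  change ∑' t, tripleTerm x y q t = _
  calc ∑' t, tripleTerm x y q t = ∑' p : ℕ × ℕ, ∑' i, tripleTerm x y q (i, p) := by
        rw [← (Equiv.prodComm _ _).tsum_eq]
        exact hswap.tsum_prod
    _ = ∑' n, ∑ p ∈ antidiagonal n, ∑' i, tripleTerm x y q (i, p) :=
        tsum_eq_tsum_sum_antidiagonal hswap.prod
    _ = _ := by
        simp_rw [sum_antidiagonal_tsum_tripleTerm hq x y _ (hz _)]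
        rw [tsum_mul_left, tsum_eulerTerm hq]
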